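/- arXiv:2211.03340 — 4 statements merged into one kernel-verified Lean document; each statement's English description precedes it below -/
import Mathlib

section
/- Every order-embedding defined on a finite subset of the rationals extends to an order-automorphism of ℚ. Precisely: if S ⊆ ℚ is finite and f : S → ℚ satisfies (x < y ↔ f x < f y) for all x, y ∈ S, then there exists an order-automorphism α of ℚ (a bijection ℚ → ℚ with x < y ↔ α x < α y) such that α x = f x for all x ∈ S. -/
/-!
Cantor's back-and-forth argument, started from the given finite partial isomorphism instead of
the empty one: the generic ideal of finite partial isomorphisms containing it and meeting every
"defined at `a`" and "defined at `b`" cofinal set is the graph of an order isomorphism, and since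
any two members of the ideal have a common extension, that isomorphism agrees with the starting
partial isomorphism.
-/

namespace Order.PartialIso

variable {α β : Type*} [LinearOrder α] [LinearOrder β]

def ofStrictMonoOn (S : Finset α) (f : α → β) (hf : StrictMonoOn f S) : PartialIso α β :=
  ⟨S.image fun x ↦ (x, f x), by
    simp only [Finset.forall_mem_image]
    exact fun x hx y hy ↦ (hf.cmp_map_eq hx hy).symm⟩

theorem exists_orderIso_extends [Countable α] [DenselyOrdered α] [NoMinOrder α]
    [NoMaxOrder α] [Nonempty α] [Countable β] [DenselyOrdered β] [NoMinOrder β] [NoMaxOrder β]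
    [Nonempty β] (p : PartialIso α β) : ∃ e : α ≃o β, ∀ q ∈ p.val, e q.1 = q.2 := by
  cases nonempty_encodable α
  cases nonempty_encodable β
  let cofinals : α ⊕ β → Cofinal (PartialIso α β) := fun c ↦
    Sum.recOn c (definedAtLeft β) (definedAtRight α)
  let I : Ideal (PartialIso α β) := idealOfCofinals p cofinals
  let F a := funOfIdeal a I (cofinal_meets_idealOfCofinals p cofinals (Sum.inl a))
  let G b := invOfIdeal b I (cofinal_meets_idealOfCofinals p cofinals (Sum.inr b))
  let e : α ≃o β := OrderIso.ofCmpEqCmp (fun a ↦ (F a).val) (fun b ↦ (G b).val) fun a b ↦ by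
    obtain ⟨f, hfI, ha⟩ := (F a).prop
    obtain ⟨g, hgI, hb⟩ := (G b).prop
    obtain ⟨m, -, hfm, hgm⟩ := I.directed _ hfI _ hgI
    exact m.prop (a, _) (hfm ha) (_, b) (hgm hb)
  refine ⟨e, fun q hq ↦ ?_⟩
  obtain ⟨f, hfI, hf⟩ := (F q.1).prop
  obtain ⟨m, -, hfm, hpm⟩ := I.directed _ hfI _ (mem_idealOfCofinals p cofinals)
  have hcmp := m.prop (q.1, _) (hfm hf) q (hpm hq)
  rw [cmp_self_eq_eq, eq_comm, cmp_eq_eq_iff] at hcmp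
  exact hcmp

theorem exists_orderIso_eqOn_of_strictMonoOn [Countable α] [DenselyOrdered α] [NoMinOrder α]
    [NoMaxOrder α] [Nonempty α] [Countable β] [DenselyOrdered β] [NoMinOrder β] [NoMaxOrder β]
    [Nonempty β] (S : Finset α) {f : α → β} (hf : StrictMonoOn f S) :
    ∃ e : α ≃o β, ∀ x ∈ S, e x = f x := by
  obtain ⟨e, he⟩ := (ofStrictMonoOn S f hf).exists_orderIso_extends
  exact ⟨e, fun x hx ↦ he (x, f x) (Finset.mem_image_of_mem _ hx)⟩

end Order.PartialIso

theorem homogeneity_of_Q (S : Finset ℚ) (f : ℚ → ℚ)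
    (hf : ∀ x ∈ S, ∀ y ∈ S, (x < y ↔ f x < f y)) :
    ∃ α : ℚ → ℚ, Function.Bijective α ∧ (∀ x y : ℚ, x < y ↔ α x < α y) ∧
      ∀ x ∈ S, α x = f x := by
  obtain ⟨e, he⟩ := Order.PartialIso.exists_orderIso_eqOn_of_strictMonoOn S
    fun x hx y hy ↦ (hf x hx y hy).1
  exact ⟨e, e.bijective, fun x y ↦ e.lt_iff_lt.symm, he⟩
end

section
/- There exists a function f : ℚ × ℚ → ℚ such that for all a, b, a', b' ∈ ℚ: f(a,b) < f(a',b') if and only if one of the following holds: (1) a ≤ 0 and a < a'; (2) a ≤ 0 and a = a' and b < b'; (3) a > 0 and a' > 0 and b < b'; (4) a > 0 and b = b' and a < a'. (That is, an ll-operation on ℚ exists.) -/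
/-!
Send `(a, b)` with `a ≤ 0` to `(a, b)` in `Iic 0 ×ₗ ℚ` and `(a, b)` with `0 < a` to `(b, a)` in
`ℚ ×ₗ Ioi 0`; the required order on pairs is then exactly the order of the ordered sum
`(Iic 0 ×ₗ ℚ) ⊕ₗ (ℚ ×ₗ Ioi 0)`. That sum is countable, dense and without endpoints, so by
Cantor's theorem it is order-isomorphic to `ℚ`.
-/

open Set

instance {α : Type*} [Countable α] : Countable (Lex α) :=
  inferInstanceAs (Countable α)

section LinearOrder

variable {α : Type*} [LinearOrder α]

def llEmbedding (c a b : α) : (Iic c ×ₗ α) ⊕ₗ (α ×ₗ Ioi c) :=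
  if h : a ≤ c then toLex (.inl (toLex (⟨a, mem_Iic.mpr h⟩, b)))
  else toLex (.inr (toLex (b, ⟨a, mem_Ioi.mpr (not_le.mp h)⟩)))

theorem llEmbedding_lt_llEmbedding_iff (c a b a' b' : α) :
    llEmbedding c a b < llEmbedding c a' b' ↔
      (a ≤ c ∧ a < a') ∨ (a ≤ c ∧ a = a' ∧ b < b') ∨
      (c < a ∧ c < a' ∧ b < b') ∨ (c < a ∧ b = b' ∧ a < a') := by
  unfold llEmbedding
  rcases le_or_gt a c with ha | ha <;> rcases le_or_gt a' c with ha' | ha'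
  · simp [ha, ha', Prod.Lex.toLex_lt_toLex, not_lt.mpr ha]
  · simp [ha, ha', not_le.mpr ha', ha.trans_lt ha']
  · simp [ha', not_le.mpr ha, not_lt.mpr ha', (ha'.trans_lt ha).not_gt]
  · simp [ha, ha', not_le.mpr ha, not_le.mpr ha', Prod.Lex.toLex_lt_toLex]

end LinearOrder

theorem exists_ll_operation :
    ∃ f : ℚ → ℚ → ℚ, ∀ a b a' b' : ℚ,
      f a b < f a' b' ↔
        (a ≤ 0 ∧ a < a') ∨ (a ≤ 0 ∧ a = a' ∧ b < b') ∨
        (0 < a ∧ 0 < a' ∧ b < b') ∨ (0 < a ∧ b = b' ∧ a < a') := by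
  obtain ⟨e⟩ := Order.iso_of_countable_dense ((Iic (0 : ℚ) ×ₗ ℚ) ⊕ₗ (ℚ ×ₗ Ioi (0 : ℚ))) ℚ
  exact ⟨fun a b ↦ e (llEmbedding 0 a b), fun a b a' b' ↦
    e.lt_iff_lt.trans (llEmbedding_lt_llEmbedding_iff 0 a b a' b')⟩
end

section
/- Every pp-operation on ℚ preserves the ternary relation R^min_≤ = {(x,y,z) ∈ ℚ³ : y ≤ x or z ≤ x}. That is, if f : ℚ × ℚ → ℚ satisfies the pp-condition, and (x,y,z) ∈ R^min_≤ and (x',y',z') ∈ R^min_≤, then (f(x,x'), f(y,y'), f(z,z')) ∈ R^min_≤. -/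
theorem pp_preserves_Rmin (f : ℚ → ℚ → ℚ)
    (hf : ∀ a b a' b' : ℚ,
      f a b ≤ f a' b' ↔ (a ≤ 0 ∧ a ≤ a') ∨ (0 < a ∧ 0 < a' ∧ b ≤ b'))
    (x y z x' y' z' : ℚ) (h : y ≤ x ∨ z ≤ x) (h' : y' ≤ x' ∨ z' ≤ x') :
    f y y' ≤ f x x' ∨ f z z' ≤ f x x' := by
  rcases h with h | h
  · rcases le_or_gt y 0 with hy | hy
    · exact Or.inl ((hf _ _ _ _).2 (Or.inl ⟨hy, h⟩))
    · have hx : 0 < x := lt_of_lt_of_le hy h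
      rcases h' with h' | h'
      · exact Or.inl ((hf _ _ _ _).2 (Or.inr ⟨hy, hx, h'⟩))
      · rcases le_or_gt z 0 with hz | hz
        · exact Or.inr ((hf _ _ _ _).2 (Or.inl ⟨hz, le_of_lt (lt_of_le_of_lt hz hx)⟩))
        · exact Or.inr ((hf _ _ _ _).2 (Or.inr ⟨hz, hx, h'⟩))
  · rcases le_or_gt z 0 with hz | hz
    · exact Or.inr ((hf _ _ _ _).2 (Or.inl ⟨hz, h⟩))
    · have hx : 0 < x := lt_of_lt_of_le hz h
      rcases h' with h' | h'
      · rcases le_or_gt y 0 with hy | hy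
        · exact Or.inl ((hf _ _ _ _).2 (Or.inl ⟨hy, le_of_lt (lt_of_le_of_lt hy hx)⟩))
        · exact Or.inl ((hf _ _ _ _).2 (Or.inr ⟨hy, hx, h'⟩))
      · exact Or.inr ((hf _ _ _ _).2 (Or.inr ⟨hz, hx, h'⟩))
end

section
/- Let 𝕀 = {(a,b) ∈ ℚ × ℚ : a < b} and define on 𝕀 the relations s ('starts') by x s y iff x₁ = y₁ and x₂ < y₂, and f ('finishes') by x f y iff x₂ = y₂ and y₁ < x₁. Then for all a, b ∈ 𝕀: a₁ < b₁ if and only if there exist c, d ∈ 𝕀 such that (∃e ∈ 𝕀, e s a ∧ e s c), d f c, and d s b. -/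
theorem sf_pp_definition_of_lt
    (I : Set (ℚ × ℚ)) (hI : I = {p : ℚ × ℚ | p.1 < p.2})
    (s : ℚ × ℚ → ℚ × ℚ → Prop) (hs : ∀ x y, s x y ↔ x.1 = y.1 ∧ x.2 < y.2)
    (f : ℚ × ℚ → ℚ × ℚ → Prop) (hf : ∀ x y, f x y ↔ x.2 = y.2 ∧ y.1 < x.1)
    (a b : ℚ × ℚ) (ha : a ∈ I) (hb : b ∈ I) :
    a.1 < b.1 ↔ ∃ c ∈ I, ∃ d ∈ I,
      (∃ e ∈ I, s e a ∧ s e c) ∧ f d c ∧ s d b := by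
  subst hI
  simp only [Set.mem_setOf_eq] at ha hb ⊢
  constructor
  · intro hab
    set m : ℚ := (b.1 + b.2) / 2 with hm
    have hbm : b.1 < m := by rw [hm]; linarith
    have hmb : m < b.2 := by rw [hm]; linarith
    have ham : a.1 < m := lt_trans hab hbm
    refine ⟨(a.1, m), ham, (b.1, m), hbm, ⟨(a.1, (a.1 + min a.2 m)/2), ?_, ?_, ?_⟩, ?_, ?_⟩
    · simp only; have := lt_min ha ham; linarith [min_le_left a.2 m]
    · rw [hs]; constructor
      · rfl
      · simp only; have := lt_min ha ham; linarith [min_le_left a.2 m]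
    · rw [hs]; constructor
      · rfl
      · simp only; have := lt_min ha ham; linarith [min_le_right a.2 m]
    · rw [hf]; exact ⟨rfl, hab⟩
    · rw [hs]; exact ⟨rfl, hmb⟩
  · rintro ⟨c, hc, d, hd, ⟨e, he, hea, hec⟩, hdc, hdb⟩
    rw [hs] at hea hec hdb
    rw [hf] at hdc
    have : a.1 = c.1 := hea.1 ▸ hec.1
    calc a.1 = c.1 := this
    _ < d.1 := hdc.2
    _ = b.1 := hdb.1
end
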